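/- Let p be a prime and let A be an F_p-brace that is strongly nilpotent of degree k, with 2^k < p. Define a·b = Σ_{i=0}^{p−2} 2^{−i}((2^i a) * b) for a,b ∈ A, where 2^i a denotes the sum of 2^i copies of a and 2^{−i} denotes the scalar action of the inverse of 2^i in F_p. Then (a+b)·c = a·c + b·c and a·(b+c) = a·b + a·c for all a,b,c ∈ A. -/

import Mathlib

/-!
Put `F x = x * c`. Writing `u + e = u ∘ v` with `v = λ_u⁻¹ e` (a Neumann series in `u * ·`,
finite because `A^[k] = 0`) gives `(u + e) * w - u * w = v * w + u * (v * w)`, so every finite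
difference of a `*`-polynomial such as `F` raises its level in the chain `A^[n]` by one. Hence the
Taylor coefficients `D(r,s) = Δ_b^s Δ_a^r F 0` lie in `A^[1+r+s]`, and Newton's formula gives
`F(n(a+b)) - F(na) - F(nb) = Σ C(n,r) C(n,s) D(r,s)` over `r, s ≥ 1`, `r + s + 1 < k`.
For such `r, s`, `x⁻¹ C(x,r) C(x,s)` is a polynomial in `x` without constant term and of degree
`< k`; summed over `x = 2^i`, `i < p - 1`, it vanishes, since `Σ_i 2^{ij} = 0` in `F_p` whenever
`2^j ≠ 1`, and `2^j < 2^k < p`.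
-/

/-- A left brace: `(A,+)` abelian group, `(A,∘)` a group, with
`a ∘ (b + c) + a = a ∘ b + a ∘ c`. -/
structure LeftBrace (A : Type) [AddCommGroup A] where
  circ : A → A → A
  one : A
  inv : A → A
  circ_assoc : ∀ a b c, circ (circ a b) c = circ a (circ b c)
  one_circ : ∀ a, circ one a = a
  circ_one : ∀ a, circ a one = a
  inv_circ : ∀ a, circ (inv a) a = one
  circ_add : ∀ a b c, circ a (b + c) + a = circ a b + circ a c

namespace LeftBrace

variable {A : Type} [AddCommGroup A]

/-- `a * b = a ∘ b - a - b`. -/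
def star (B : LeftBrace A) (a b : A) : A := B.circ a b - a - b

/-- `lchain B n = Aⁿ` for `n ≥ 1` (and `lchain B 0 = ⊤`): `A¹ = A`, and
`Aⁿ⁺¹` is the additive subgroup generated by `{a * b : a ∈ A, b ∈ Aⁿ}`. -/
def lchain (B : LeftBrace A) : ℕ → AddSubgroup A
  | 0 => ⊤
  | 1 => ⊤
  | n + 2 => AddSubgroup.closure {x | ∃ a : A, ∃ b ∈ B.lchain (n + 1), x = B.star a b}

/-- `rchain B n = A⁽ⁿ⁾` for `n ≥ 1`: `A⁽¹⁾ = A`, and `A⁽ⁿ⁺¹⁾` is the additive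
subgroup generated by `{a * b : a ∈ A⁽ⁿ⁾, b ∈ A}`. -/
def rchain (B : LeftBrace A) : ℕ → AddSubgroup A
  | 0 => ⊤
  | 1 => ⊤
  | n + 2 => AddSubgroup.closure {x | ∃ a ∈ B.rchain (n + 1), ∃ b : A, x = B.star a b}

/-- `schain B n = A^[n]` for `n ≥ 1`:  `A^[1] = A`, and
`A^[i+1] = Σ_{j=1}^{i} A^[j] * A^[i+1-j]` (additive subgroup generated by the
corresponding products). -/
def schain (B : LeftBrace A) : ℕ → AddSubgroup A
  | 0 => ⊤
  | 1 => ⊤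
  | n + 2 => AddSubgroup.closure
      {x | ∃ j : Fin (n + 1), ∃ u ∈ B.schain (j.1 + 1), ∃ v ∈ B.schain (n + 1 - j.1),
        x = B.star u v}

/-- An ideal of a left brace: an additive subgroup, normal in `(A,∘)`, and
invariant under all maps `λ_a(x) = a * x + x`. -/
structure IsIdeal (B : LeftBrace A) (I : AddSubgroup A) : Prop where
  lam_mem : ∀ a : A, ∀ x ∈ I, B.star a x + x ∈ I
  conj_mem : ∀ a : A, ∀ x ∈ I, B.circ (B.circ a x) (B.inv a) ∈ I

/-- Left chain of an ideal: `ichainL B I n = Iⁿ⁺¹`, where `I¹ = I` and `Iⁱ⁺¹`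
is the additive subgroup generated by `{a * b : a ∈ I, b ∈ Iⁱ}`. -/
def ichainL (B : LeftBrace A) (I : AddSubgroup A) : ℕ → AddSubgroup A
  | 0 => I
  | n + 1 => AddSubgroup.closure {x | ∃ a ∈ I, ∃ b ∈ B.ichainL I n, x = B.star a b}

/-- Right chain of an ideal: `ichainR B I n = I⁽ⁿ⁺¹⁾`, where `I⁽¹⁾ = I` and
`I⁽ⁱ⁺¹⁾` is the additive subgroup generated by `{a * b : a ∈ I⁽ⁱ⁾, b ∈ I}`. -/
def ichainR (B : LeftBrace A) (I : AddSubgroup A) : ℕ → AddSubgroup A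
  | 0 => I
  | n + 1 => AddSubgroup.closure {x | ∃ a ∈ B.ichainR I n, ∃ b ∈ I, x = B.star a b}

end LeftBrace

variable {A : Type} [AddCommGroup A]

/-- `a · b = Σ_{i=0}^{p-2} 2^{-i}((2^i a) * b)`, where `2^i a` is the sum of
`2^i` copies of `a` and `2^{-i}` acts as the inverse of `2^i` in `F_p`. -/
def braceMul (p : ℕ) [Module (ZMod p) A] (B : LeftBrace A) (a b : A) : A :=
  ∑ i ∈ Finset.range (p - 1), ((2 : ZMod p) ^ i)⁻¹ • B.star ((2 ^ i : ℕ) • a) b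

open Finset Polynomial

theorem FiniteField.geom_sum_card_sub_one_eq_zero {K : Type*} [Field K] [Fintype K] {y : K}
    (h0 : y ≠ 0) (h1 : y ≠ 1) : ∑ i ∈ range (Fintype.card K - 1), y ^ i = 0 := by
  rw [geom_sum_eq h1, FiniteField.pow_card_sub_one_eq_one y h0, sub_self, zero_div]

namespace ZMod

variable {p : ℕ} [Fact p.Prime]

theorem two_pow_ne_zero_of_lt {m : ℕ} (h : 2 ^ m < p) : (2 : ZMod p) ^ m ≠ 0 := by
  rw [← Nat.cast_ofNat, ← Nat.cast_pow, Ne, natCast_eq_zero_iff]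
  exact fun hdvd => (Nat.le_of_dvd (by positivity) hdvd).not_gt h

theorem two_pow_ne_one_of_lt {m : ℕ} (hm : m ≠ 0) (h : 2 ^ m < p) : (2 : ZMod p) ^ m ≠ 1 := by
  rw [← Nat.cast_ofNat, ← Nat.cast_pow, ← Nat.cast_one, Ne, natCast_eq_natCast_iff',
    Nat.mod_eq_of_lt h, Nat.mod_eq_of_lt (Fact.out : p.Prime).one_lt]
  exact (Nat.one_lt_two_pow hm).ne'

theorem sum_two_pow_mul_eval_eq_zero (S : (ZMod p)[X]) (hS : 2 ^ (S.natDegree + 1) < p) :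
    ∑ i ∈ range (p - 1), (2 : ZMod p) ^ i * S.eval (2 ^ i) = 0 := by
  simp_rw [eval_eq_sum_range, mul_sum]
  rw [sum_comm]
  refine sum_eq_zero fun t ht => ?_
  have hpow : 2 ^ (t + 1) < p :=
    lt_of_le_of_lt (Nat.pow_le_pow_right two_pos (by simpa using ht)) hS
  have hgeom := FiniteField.geom_sum_card_sub_one_eq_zero (two_pow_ne_zero_of_lt hpow)
    (two_pow_ne_one_of_lt t.succ_ne_zero hpow)
  rw [ZMod.card] at hgeom
  calc ∑ i ∈ range (p - 1), (2 : ZMod p) ^ i * (S.coeff t * (2 ^ i) ^ t)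
      = S.coeff t * ∑ i ∈ range (p - 1), ((2 : ZMod p) ^ (t + 1)) ^ i := by
        rw [mul_sum]; refine sum_congr rfl fun i _ => by ring
    _ = 0 := by rw [hgeom, mul_zero]

end ZMod

theorem Nat.cast_succ_choose_succ_mul_factorial {R : Type*} [CommRing R] (n r : ℕ) :
    ((n + 1).choose (r + 1) : R) * (r + 1).factorial =
      (n + 1) * (descPochhammer R r).eval (n : R) := by
  rw [descPochhammer_eval_eq_descFactorial, mul_comm, ← Nat.cast_mul,
    ← Nat.descFactorial_eq_factorial_mul_choose, Nat.succ_descFactorial_succ]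
  push_cast; ring

theorem ZMod.sum_inv_two_pow_mul_choose_mul_choose_eq_zero {p : ℕ} [Fact p.Prime] {r s : ℕ}
    (h : 2 ^ (r + s + 1) < p) :
    ∑ i ∈ range (p - 1),
      ((2 : ZMod p) ^ i)⁻¹ * ((2 ^ i).choose (r + 1) * (2 ^ i).choose (s + 1) : ℕ) = 0 := by
  set Q : ℕ → (ZMod p)[X] := fun r => (descPochhammer (ZMod p) r).comp (X - 1)
  have hfac : ∀ n, n < p → (n.factorial : ZMod p) ≠ 0 := fun n hn => by
    rw [Ne, natCast_eq_zero_iff, Nat.Prime.dvd_factorial Fact.out]; omega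
  have hrs : r + s + 1 < p := lt_of_le_of_lt (Nat.lt_two_pow_self).le h
  have hterm : ∀ i, ((2 : ZMod p) ^ i)⁻¹ * ((2 ^ i).choose (r + 1) * (2 ^ i).choose (s + 1) : ℕ) *
      ((r + 1).factorial * (s + 1).factorial) = 2 ^ i * (Q r * Q s).eval (2 ^ i) := by
    intro i
    obtain ⟨n, hn⟩ : ∃ n, 2 ^ i = n + 1 := ⟨2 ^ i - 1, (Nat.sub_add_cancel Nat.one_le_two_pow).symm⟩
    have hx : (2 : ZMod p) ^ i = n + 1 := by exact_mod_cast congrArg (Nat.cast (R := ZMod p)) hn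
    have h2 : 2 ^ 1 < p := (Nat.pow_le_pow_right two_pos (by omega)).trans_lt h
    have hx0 : (2 : ZMod p) ^ i ≠ 0 := pow_ne_zero i (by simpa using two_pow_ne_zero_of_lt h2)
    calc _ = ((2 : ZMod p) ^ i)⁻¹ * (((n + 1).choose (r + 1) : ZMod p) * (r + 1).factorial) *
            (((n + 1).choose (s + 1) : ZMod p) * (s + 1).factorial) := by
          rw [hn]; push_cast; ring
      _ = ((2 : ZMod p) ^ i)⁻¹ * (2 ^ i * (descPochhammer (ZMod p) r).eval (n : ZMod p)) *
            (2 ^ i * (descPochhammer (ZMod p) s).eval (n : ZMod p)) := by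
          rw [Nat.cast_succ_choose_succ_mul_factorial, Nat.cast_succ_choose_succ_mul_factorial, hx]
      _ = 2 ^ i * (Q r * Q s).eval (2 ^ i) := by
          simp only [Q, eval_mul, eval_comp, eval_sub, eval_X, eval_one, hx, add_sub_cancel_right]
          field_simp
  have hdeg : (Q r * Q s).natDegree ≤ r + s := by
    refine natDegree_mul_le.trans (add_le_add ?_ ?_) <;>
      exact natDegree_comp_le.trans
        (by rw [descPochhammer_natDegree, ← C_1, natDegree_X_sub_C, mul_one])
  rw [← mul_left_inj' (mul_ne_zero (hfac (r + 1) (by omega)) (hfac (s + 1) (by omega))), zero_mul,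
    sum_mul]
  simp_rw [hterm]
  exact sum_two_pow_mul_eval_eq_zero _ (lt_of_le_of_lt (Nat.pow_le_pow_right two_pos (by omega)) h)

section NewtonFormula

variable {M G : Type*} [AddCommMonoid M] [AddCommGroup G]

theorem shift_eq_sum_range_fwdDiff_iter (f : M → G) (h y : M) {n L : ℕ} (hn : n ≤ L) :
    f (y + n • h) = ∑ r ∈ range (L + 1), n.choose r • (fwdDiff h)^[r] f y := by
  rw [shift_eq_sum_fwdDiff_iter h f n y]
  exact (eventually_constant_sum (fun r hr => by rw [Nat.choose_eq_zero_of_lt hr, zero_smul])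
    (by omega)).symm

theorem sub_sub_add_eq_sum_fwdDiff_iter (F : M → G) (a b : M) {n m L : ℕ} (hn : n ≤ L)
    (hm : m ≤ L) :
    F (n • a + m • b) - F (n • a) - F (m • b) + F 0 =
      ∑ r ∈ range L, ∑ s ∈ range L,
        (n.choose (r + 1) * m.choose (s + 1)) • (fwdDiff b)^[s + 1] ((fwdDiff a)^[r + 1] F) 0 := by
  have hab : F (n • a + m • b) = ∑ r ∈ range (L + 1), ∑ s ∈ range (L + 1),
      (n.choose r * m.choose s) • (fwdDiff b)^[s] ((fwdDiff a)^[r] F) 0 := by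
    have h := shift_eq_sum_range_fwdDiff_iter (fun x => F (x + m • b)) a 0 hn
    rw [zero_add] at h
    rw [h]
    refine sum_congr rfl fun r _ => ?_
    rw [fwdDiff_iter_comp_add, shift_eq_sum_range_fwdDiff_iter ((fwdDiff a)^[r] F) b 0 hm, smul_sum]
    simp only [mul_smul]
  have ha : F (n • a) = ∑ r ∈ range (L + 1), n.choose r • (fwdDiff a)^[r] F 0 := by
    rw [← shift_eq_sum_range_fwdDiff_iter F a 0 hn, zero_add]
  have hb : F (m • b) = ∑ s ∈ range (L + 1), m.choose s • (fwdDiff b)^[s] F 0 := by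
    rw [← shift_eq_sum_range_fwdDiff_iter F b 0 hm, zero_add]
  rw [hab, ha, hb]
  simp only [sum_range_succ', Nat.choose_zero_right, mul_one, one_mul, Function.iterate_zero,
    id, sum_add_distrib, one_smul]
  abel

end NewtonFormula

namespace LeftBrace

variable (B : LeftBrace A)

theorem circ_add_eq (a x y : A) : B.circ a (x + y) = B.circ a x + B.circ a y - a :=
  eq_sub_of_add_eq (B.circ_add a x y)

theorem circ_zero (a : A) : B.circ a 0 = a := by
  simpa using (B.circ_add a 0 0).symm

theorem one_eq_zero : B.one = 0 := (B.circ_zero B.one).symm.trans (B.one_circ 0)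

theorem zero_circ (a : A) : B.circ 0 a = a := by
  rw [← B.one_eq_zero, B.one_circ]

theorem star_add_right (a x y : A) : B.star a (x + y) = B.star a x + B.star a y := by
  simp only [star, circ_add_eq]; abel

theorem star_sub_right (a x y : A) : B.star a (x - y) = B.star a x - B.star a y :=
  map_sub (AddMonoidHom.mk' (B.star a) (B.star_add_right a)) x y

theorem star_zero_left (a : A) : B.star 0 a = 0 := by
  simp [star, zero_circ]

theorem star_circ_left (u v w : A) :
    B.star (B.circ u v) w = B.star u w + B.star v w + B.star u (B.star v w) := by
  have hv : B.circ v w = v + w + B.star v w := by rw [star]; abel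
  rw [star, B.circ_assoc, hv, B.circ_add_eq, B.circ_add_eq]
  simp only [star]
  abel

@[simp] theorem schain_zero : B.schain 0 = ⊤ := by rw [schain]

@[simp] theorem schain_one : B.schain 1 = ⊤ := by rw [schain]

theorem star_mem_schain_add_two {i j : ℕ} {u v : A} (hu : u ∈ B.schain (i + 1))
    (hv : v ∈ B.schain (j + 1)) : B.star u v ∈ B.schain (i + j + 2) := by
  rw [schain]
  refine AddSubgroup.subset_closure ⟨⟨i, by omega⟩, u, hu, v, ?_, rfl⟩
  rwa [show i + j + 1 - i = j + 1 by omega]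

theorem schain_succ_le (n : ℕ) : B.schain (n + 1) ≤ B.schain n := by
  induction n using Nat.strong_induction_on with
  | _ n ih =>
    match n with
    | 0 => simp
    | 1 => simp
    | m + 2 =>
      rw [schain, AddSubgroup.closure_le]
      rintro _ ⟨⟨j, hj⟩, u, hu, v, hv, rfl⟩
      rcases Nat.lt_or_ge j (m + 1) with hjm | hjm
      · have hv' : v ∈ B.schain (m - j + 1) :=
          ih (m - j + 1) (by omega) (by rwa [show m - j + 1 + 1 = m + 1 + 1 - j by omega])
        simpa [show j + (m - j) + 2 = m + 2 by omega] using B.star_mem_schain_add_two hu hv'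
      · obtain rfl : j = m + 1 := by omega
        have hu' : u ∈ B.schain (m + 1) := ih (m + 1) (by omega) hu
        simpa using B.star_mem_schain_add_two (j := 0) hu' (by simp)

theorem schain_antitone : Antitone B.schain := antitone_nat_of_succ_le B.schain_succ_le

theorem schain_eq_bot_of_le {k n : ℕ} (hnil : B.schain k = ⊥) (h : k ≤ n) : B.schain n = ⊥ :=
  eq_bot_mono (B.schain_antitone h) hnil

theorem schain_sub_one_add_one (i : ℕ) : B.schain (i - 1 + 1) = B.schain i := by
  cases i <;> simp

theorem star_mem_schain {i j : ℕ} {u v : A} (hu : u ∈ B.schain i) (hv : v ∈ B.schain j) :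
    B.star u v ∈ B.schain (i + j) := by
  rw [← schain_sub_one_add_one] at hu hv
  exact B.schain_antitone (by omega) (B.star_mem_schain_add_two hu hv)

/-- Partial sums of `Σ_j (-1)^j (u * ·)^[j] e`, which solves `v + u * v = e`, i.e.
`u ∘ v = u + e`, once the terms reach `A^[k] = 0`. -/
def neumann (u e : A) : ℕ → A
  | 0 => 0
  | n + 1 => e - B.star u (neumann u e n)

theorem neumann_add_star_neumann_sub_mem (u e : A) (n : ℕ) :
    B.neumann u e n + B.star u (B.neumann u e n) - e ∈ B.schain (n + 1) := by
  induction n with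
  | zero => simp
  | succ n ih =>
    have h := B.star_mem_schain (i := 1) (u := u) (by simp) ih
    rw [add_comm 1, ← AddSubgroup.neg_mem_iff] at h
    -- the error at step `n + 1` is `-(u * ε)`, with `ε` the error at step `n`
    convert h using 1
    simp only [neumann, star_sub_right, star_add_right]
    abel

variable {k : ℕ}

theorem circ_neumann (hnil : B.schain k = ⊥) (u e : A) : B.circ u (B.neumann u e k) = u + e := by
  have h := B.neumann_add_star_neumann_sub_mem u e k
  rw [B.schain_eq_bot_of_le hnil k.le_succ, AddSubgroup.mem_bot, sub_eq_zero] at h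
  calc B.circ u (B.neumann u e k) = u + (B.neumann u e k + B.star u (B.neumann u e k)) := by
        rw [star]; abel
    _ = u + e := by rw [h]

theorem star_add_left_sub_star (hnil : B.schain k = ⊥) (u e w : A) :
    B.star (u + e) w - B.star u w =
      B.star (B.neumann u e k) w + B.star u (B.star (B.neumann u e k) w) := by
  rw [← B.circ_neumann hnil u e, star_circ_left]
  abel

/-- `*`-polynomial maps of weight `d`; the variable has weight `0`, as its differences are
constants. -/
inductive IsStarPoly : ℕ → (A → A) → Prop
  | const {d : ℕ} {z : A} : z ∈ B.schain d → IsStarPoly d fun _ => z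
  | id : IsStarPoly 0 fun x => x
  | add {d : ℕ} {G H : A → A} : IsStarPoly d G → IsStarPoly d H → IsStarPoly d fun x => G x + H x
  | neg {d : ℕ} {G : A → A} : IsStarPoly d G → IsStarPoly d fun x => -G x
  | star {d e : ℕ} {G H : A → A} :
      IsStarPoly d G → IsStarPoly e H → IsStarPoly (d + e) fun x => B.star (G x) (H x)
  | mono {d e : ℕ} {G : A → A} : IsStarPoly d G → e ≤ d → IsStarPoly e G

namespace IsStarPoly

variable {B} {d e : ℕ} {G H : A → A}

theorem mem (h : B.IsStarPoly d G) (x : A) : G x ∈ B.schain d := by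
  induction h with
  | const hz => exact hz
  | id => simp
  | add _ _ ihG ihH => exact add_mem ihG ihH
  | neg _ ih => exact neg_mem ih
  | star _ _ ihG ihH => exact B.star_mem_schain ihG ihH
  | mono _ hle ih => exact B.schain_antitone hle ih

theorem congr (h : B.IsStarPoly d G) (hG : ∀ x, G x = H x) : B.IsStarPoly d H :=
  funext hG ▸ h

theorem sub (hG : B.IsStarPoly d G) (hH : B.IsStarPoly d H) :
    B.IsStarPoly d fun x => G x - H x :=
  (hG.add hH.neg).congr fun _ => (sub_eq_add_neg _ _).symm

theorem neumann (hG : B.IsStarPoly d G) (hH : B.IsStarPoly e H) (n : ℕ) :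
    B.IsStarPoly e fun x => B.neumann (G x) (H x) n := by
  induction n with
  | zero => exact const (zero_mem _)
  | succ n ih => exact hH.sub ((hG.star ih).mono (by omega))

theorem fwdDiff (hnil : B.schain k = ⊥) (y : A) (h : B.IsStarPoly d G) :
    B.IsStarPoly (d + 1) (_root_.fwdDiff y G) := by
  induction h with
  | const _ => exact (const (zero_mem _)).congr fun x => by simp [_root_.fwdDiff]
  | id => exact (const (z := y) (by simp)).congr fun x => by simp [_root_.fwdDiff]
  | add _ _ ihG ihH => exact (ihG.add ihH).congr fun x => by simp only [_root_.fwdDiff]; abel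
  | neg _ ih => exact ih.neg.congr fun x => by simp only [_root_.fwdDiff]; abel
  | mono _ hle ih => exact ih.mono (by omega)
  | @star d e G H hG hH ihG ihH =>
    have hV := hG.neumann ihG k
    have hH' : B.IsStarPoly e fun x => H (x + y) :=
      (hH.add (ihH.mono (by omega))).congr fun x => by simp [_root_.fwdDiff]
    refine ((((hV.star hH').mono (by omega)).add ((hG.star (hV.star hH')).mono (by omega))).add
      ((hG.star ihH).mono (by omega))).congr fun x => ?_
    have hGy : G (x + y) = G x + _root_.fwdDiff y G x := by simp [_root_.fwdDiff]
    calc _ = (B.star (G x + _root_.fwdDiff y G x) (H (x + y)) - B.star (G x) (H (x + y))) +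
          B.star (G x) (_root_.fwdDiff y H x) := by rw [star_add_left_sub_star B hnil]
      _ = _ := by
          rw [← hGy]
          simp only [_root_.fwdDiff, star_sub_right]
          abel

theorem fwdDiff_iter (hnil : B.schain k = ⊥) (y : A) (h : B.IsStarPoly d G) (r : ℕ) :
    B.IsStarPoly (d + r) ((_root_.fwdDiff y)^[r] G) := by
  induction r with
  | zero => exact h
  | succ r ih => exact (ih.fwdDiff hnil y).congr fun x => by rw [Function.iterate_succ_apply']

end IsStarPoly

theorem fwdDiff_iter_fwdDiff_iter_star_eq_zero (hnil : B.schain k = ⊥) (a b c x : A)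
    {r s : ℕ} (h : k ≤ r + s + 1) :
    (fwdDiff b)^[s] ((fwdDiff a)^[r] fun y => B.star y c) x = 0 := by
  have hF : B.IsStarPoly (0 + 1) fun y => B.star y c :=
    IsStarPoly.id.star (IsStarPoly.const (z := c) (by simp))
  have hmem := ((hF.fwdDiff_iter hnil a r).fwdDiff_iter hnil b s).mem x
  rwa [B.schain_eq_bot_of_le hnil (by omega), AddSubgroup.mem_bot] at hmem

theorem star_nsmul_add_sub_star_sub_star (a b c : A) {n L : ℕ} (hn : n ≤ L) :
    B.star (n • (a + b)) c - B.star (n • a) c - B.star (n • b) c =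
      ∑ r ∈ range L, ∑ s ∈ range L, (n.choose (r + 1) * n.choose (s + 1)) •
        (fwdDiff b)^[s + 1] ((fwdDiff a)^[r + 1] fun x => B.star x c) 0 := by
  rw [smul_add, ← sub_sub_add_eq_sum_fwdDiff_iter (fun x => B.star x c) a b hn hn,
    B.star_zero_left, add_zero]

end LeftBrace

theorem braceMul_add_left_and_right_general {p k : ℕ} (hp : p.Prime)
    [Module (ZMod p) A] (B : LeftBrace A)
    (hnil : B.schain k = ⊥) (hpk : 2 ^ k < p)
    (a b c : A) :
    braceMul p B (a + b) c = braceMul p B a c + braceMul p B b c ∧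
      braceMul p B a (b + c) = braceMul p B a b + braceMul p B a c := by
  have : Fact p.Prime := ⟨hp⟩
  refine ⟨?_, by simp only [braceMul, B.star_add_right, smul_add, sum_add_distrib]⟩
  set D : ℕ → ℕ → A := fun r s =>
    (fwdDiff b)^[s + 1] ((fwdDiff a)^[r + 1] fun x => B.star x c) 0
  have hcoeff : ∀ r s, (∑ i ∈ range (p - 1), ((2 : ZMod p) ^ i)⁻¹ *
      ((2 ^ i).choose (r + 1) * (2 ^ i).choose (s + 1) : ℕ)) • D r s = 0 := by
    intro r s
    rcases lt_or_ge (r + s + 1) k with h | h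
    · rw [ZMod.sum_inv_two_pow_mul_choose_mul_choose_eq_zero
        ((Nat.pow_lt_pow_right one_lt_two h).trans hpk), zero_smul]
    · rw [show D r s = 0 from B.fwdDiff_iter_fwdDiff_iter_star_eq_zero hnil a b c 0 (by omega),
        smul_zero]
  have hle : ∀ i ∈ range (p - 1), 2 ^ i ≤ 2 ^ p := fun i hi =>
    Nat.pow_le_pow_right two_pos (by rw [mem_range] at hi; omega)
  rw [← sub_eq_zero, ← sub_sub, braceMul, braceMul, braceMul, ← sum_sub_distrib,
    ← sum_sub_distrib, sum_congr rfl fun i hi => by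
      rw [← smul_sub, ← smul_sub, B.star_nsmul_add_sub_star_sub_star a b c (hle i hi)]]
  simp only [smul_sum, ← Nat.cast_smul_eq_nsmul (ZMod p), smul_smul]
  rw [sum_comm]
  refine sum_eq_zero fun r _ => ?_
  rw [sum_comm]
  exact sum_eq_zero fun s _ => by rw [← sum_smul]; exact hcoeff r s

/-- on a strongly nilpotent `F_p`-brace of degree `k` with `2^k < p`,
the operation `a · b = Σ_{i=0}^{p-2} 2^{-i}((2^i a) * b)` is additive in each
variable. -/
theorem braceMul_add_left_and_right {p k : ℕ} (hp : p.Prime)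
    [Module (ZMod p) A] (B : LeftBrace A)
    (hFp : ∀ (α : ZMod p) (a b : A), B.star a (α • b) = α • B.star a b)
    (hnil : B.schain k = ⊥) (hdeg : B.schain (k - 1) ≠ ⊥) (hpk : 2 ^ k < p)
    (a b c : A) :
    braceMul p B (a + b) c = braceMul p B a c + braceMul p B b c ∧
      braceMul p B a (b + c) = braceMul p B a b + braceMul p B a c :=
  braceMul_add_left_and_right_general hp B hnil hpk a b c
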